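/- In the two-player interconnected contest with Tullock contest success function with parameter γ ∈ (0,1], for a pair of effective-effort vectors (y_1, y_2) define B⁺(y_1,y_2) = {k ∈ B : y_1^k > 0 and y_2^k > 0} and, for i ∈ {1,2}, A_i(y_1,y_2) = {k ∈ B : y_i^k > 0 and y_{-i}^k = 0}. Then for any two pairs (y*_1, y*_2) ∈ T_1 × T_2 and (y**_1, y**_2) ∈ T_1 × T_2 of equilibrium effective-effort vectors, B⁺(y*_1,y*_2) = B⁺(y**_1,y**_2), A_1(y*_1,y*_2) = A_1(y**_1,y**_2), and A_2(y*_1,y*_2) = A_2(y**_1,y**_2). -/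

import Mathlib

/-!
Replacing player 1's payoff by `∑ v - prize - c₁ ∑ b` turns the contest into a zero-sum game
with loss `contestLoss`. The two payoffs agree as soon as every battlefield receives positive
effective effort from someone, which holds in equilibrium because player 0 could otherwise win an
empty battlefield for half its value; perturbing deviations of player 1 by a small uniform effort
then shows that every equilibrium is a saddle point of the loss. Saddle points are
interchangeable, so equilibrium strategies are best responses to all equilibrium strategies of the
opponent. For `γ ≤ 1` the Tullock share is concave in one's own effective effort, strictly where
the opponent is active, so two best responses to the same strategy have equal effective efforts
on the opponent's support. Off that support, positivity is forced because every battlefield is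
contested.
-/

open Finset Matrix

/-- Effective effort of a player with spillover matrix `ρ` and effort vector `e`
at battlefield `k`: `y^k = e^k + ∑_{l ≠ k} ρ^{l,k} e^l`. -/
noncomputable def effY {m : ℕ} (ρ : Matrix (Fin m) (Fin m) ℝ) (e : Fin m → ℝ)
    (k : Fin m) : ℝ :=
  e k + ∑ l ∈ Finset.univ.erase k, ρ l k * e l

/-- Tullock contest success function with parameter `γ`.  When both effective
efforts are `0` this gives `0/0 = 0`, matching the convention. -/
noncomputable def tullock (γ y₁ y₂ : ℝ) : ℝ :=
  y₁ ^ γ / (y₁ ^ γ + y₂ ^ γ)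

/-- Payoff of player `i` in the interconnected contest. -/
noncomputable def payoff {m : ℕ} (γ : ℝ) (v : Fin m → ℝ) (c : Fin 2 → ℝ)
    (ρ : Fin 2 → Matrix (Fin m) (Fin m) ℝ) (e : Fin 2 → Fin m → ℝ) (i : Fin 2) : ℝ :=
  (∑ k, v k * tullock γ (effY (ρ i) (e i) k) (effY (ρ (1 - i)) (e (1 - i)) k))
    - c i * ∑ k, e i k

/-- Pure strategy Nash equilibrium of the interconnected contest:
nonnegative efforts, and no profitable deviation to any nonnegative effort vector. -/
def IsNashEq {m : ℕ} (γ : ℝ) (v : Fin m → ℝ) (c : Fin 2 → ℝ)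
    (ρ : Fin 2 → Matrix (Fin m) (Fin m) ℝ) (e : Fin 2 → Fin m → ℝ) : Prop :=
  (∀ i k, 0 ≤ e i k) ∧
  ∀ (i : Fin 2) (e' : Fin m → ℝ), (∀ k, 0 ≤ e' k) →
    payoff γ v c ρ (Function.update e i e') i ≤ payoff γ v c ρ e i

/-- Winning probability of player `i` at battlefield `k` under profile `e`. -/
noncomputable def eqProb {m : ℕ} (γ : ℝ) (ρ : Fin 2 → Matrix (Fin m) (Fin m) ℝ)
    (e : Fin 2 → Fin m → ℝ) (i : Fin 2) (k : Fin m) : ℝ :=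
  tullock γ (effY (ρ i) (e i) k) (effY (ρ (1 - i)) (e (1 - i)) k)

open Set

section Tullock

variable {γ a b : ℝ}

lemma div_add_le_div_add {s s' t : ℝ} (hs : 0 ≤ s) (ht : 0 ≤ t) (h : s ≤ s') :
    s / (s + t) ≤ s' / (s' + t) := by
  rcases (add_nonneg hs ht).eq_or_lt with h0 | h0
  · rw [← h0, div_zero]
    exact div_nonneg (hs.trans h) (by linarith)
  · rw [div_le_div_iff₀ h0 (by linarith)]
    nlinarith

lemma strictConcaveOn_div_add {t : ℝ} (ht : 0 < t) :
    StrictConcaveOn ℝ (Ici 0) (fun s : ℝ => s / (s + t)) := by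
  refine ⟨convex_Ici 0, fun x hx y hy hxy a b ha hb hab => ?_⟩
  simp only [Set.mem_Ici, smul_eq_mul] at *
  obtain rfl : b = 1 - a := by linarith
  have hgap : (a * x + (1 - a) * y) / (a * x + (1 - a) * y + t)
      - (a * (x / (x + t)) + (1 - a) * (y / (y + t)))
      = a * (1 - a) * t * (x - y) ^ 2 / ((x + t) * (y + t) * (a * x + (1 - a) * y + t)) := by
    field_simp
    ring
  have : 0 < a * (1 - a) * t * (x - y) ^ 2 / ((x + t) * (y + t) * (a * x + (1 - a) * y + t)) := by
    have := sub_ne_zero.2 hxy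
    positivity
  linarith

lemma tullock_nonneg (ha : 0 ≤ a) (hb : 0 ≤ b) : 0 ≤ tullock γ a b :=
  div_nonneg (Real.rpow_nonneg ha γ) (add_nonneg (Real.rpow_nonneg ha γ) (Real.rpow_nonneg hb γ))

lemma tullock_zero_left (hγ : 0 < γ) (b : ℝ) : tullock γ 0 b = 0 := by
  rw [tullock, Real.zero_rpow hγ.ne', zero_div]

lemma tullock_zero_right (hγ : 0 < γ) (ha : 0 < a) : tullock γ a 0 = 1 := by
  rw [tullock, Real.zero_rpow hγ.ne', add_zero, div_self (Real.rpow_pos_of_pos ha γ).ne']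

lemma tullock_add_tullock_swap (ha : 0 ≤ a) (hb : 0 ≤ b) (h : 0 < a ∨ 0 < b) :
    tullock γ a b + tullock γ b a = 1 := by
  have hsum : 0 < a ^ γ + b ^ γ := by
    rcases h with h | h
    · linarith [Real.rpow_pos_of_pos h γ, Real.rpow_nonneg hb γ]
    · linarith [Real.rpow_pos_of_pos h γ, Real.rpow_nonneg ha γ]
  rw [tullock, tullock, add_comm (b ^ γ), ← add_div, div_self hsum.ne']

lemma tullock_mono_left (hγ : 0 ≤ γ) (ha : 0 ≤ a) (hb : 0 ≤ b) {a' : ℝ} (h : a ≤ a') :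
    tullock γ a b ≤ tullock γ a' b :=
  div_add_le_div_add (Real.rpow_nonneg ha γ) (Real.rpow_nonneg hb γ) (Real.rpow_le_rpow ha h hγ)

lemma tullock_anti_right (hγ : 0 ≤ γ) (ha : 0 ≤ a) (hb : 0 ≤ b) {b' : ℝ} (h : b ≤ b') :
    tullock γ a b' ≤ tullock γ a b := by
  rcases (Real.rpow_nonneg ha γ).eq_or_lt with ha0 | ha0
  · rw [tullock, tullock, ← ha0, zero_div, zero_div]
  · exact div_le_div_of_nonneg_left ha0.le (by linarith [Real.rpow_nonneg hb γ])
      (by linarith [Real.rpow_le_rpow hb h hγ])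

variable (hγ0 : 0 < γ) (hγ1 : γ ≤ 1)
include hγ0 hγ1

lemma tullock_strictConcaveOn {Y : ℝ} (hY : 0 < Y) :
    StrictConcaveOn ℝ (Ici 0) (fun y => tullock γ y Y) := by
  refine ⟨convex_Ici 0, fun x hx y hy hxy a b ha hb hab => ?_⟩
  have hxγ := Real.rpow_nonneg (Set.mem_Ici.1 hx) γ
  have hyγ := Real.rpow_nonneg (Set.mem_Ici.1 hy) γ
  have hne : x ^ γ ≠ y ^ γ := (Real.rpow_left_injOn hγ0.ne').ne hx hy hxy
  calc a • tullock γ x Y + b • tullock γ y Y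
      < (a • x ^ γ + b • y ^ γ) / (a • x ^ γ + b • y ^ γ + Y ^ γ) :=
        (strictConcaveOn_div_add (Real.rpow_pos_of_pos hY γ)).2 hxγ hyγ hne ha hb hab
    _ ≤ tullock γ (a • x + b • y) Y :=
        div_add_le_div_add (by positivity) (Real.rpow_nonneg hY.le γ)
          ((Real.concaveOn_rpow hγ0.le hγ1).2 hx hy ha.le hb.le hab)

lemma tullock_concaveOn {Y : ℝ} (hY : 0 ≤ Y) :
    ConcaveOn ℝ (Ici 0) (fun y => tullock γ y Y) := by
  rcases hY.eq_or_lt with rfl | hY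
  · refine ⟨convex_Ici 0, fun x hx y hy a b ha hb hab => ?_⟩
    simp only [Set.mem_Ici, smul_eq_mul] at *
    set w := a * x + b * y
    -- `tullock γ · 0` is the indicator of `(0, ∞)`, a concave function on `[0, ∞)`
    have hterm : ∀ {t z : ℝ}, 0 ≤ t → 0 ≤ z → t * z ≤ w →
        t * tullock γ z 0 ≤ t * tullock γ w 0 := by
      intro t z ht hz htz
      rcases ht.eq_or_lt with rfl | ht
      · simp
      rcases hz.eq_or_lt with rfl | hz
      · rw [tullock_zero_left hγ0, mul_zero]
        exact mul_nonneg ht.le (tullock_nonneg (by positivity) le_rfl)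
      · rw [tullock_zero_right hγ0 hz, tullock_zero_right hγ0 (by nlinarith)]
    have hx' := hterm ha hx (by nlinarith [mul_nonneg hb hy])
    have hy' := hterm hb hy (by nlinarith [mul_nonneg ha hx])
    calc a * tullock γ x 0 + b * tullock γ y 0 ≤ (a + b) * tullock γ w 0 := by linarith
      _ = tullock γ w 0 := by rw [hab, one_mul]
  · exact (tullock_strictConcaveOn hγ0 hγ1 hY).concaveOn

lemma tullock_strictConvexOn_right {X : ℝ} (hX : 0 < X) :
    StrictConvexOn ℝ (Ici 0) (fun y => tullock γ X y) :=
  ((tullock_strictConcaveOn hγ0 hγ1 hX).neg.add_const 1).congr fun y hy => by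
    have := tullock_add_tullock_swap (γ := γ) hX.le (Set.mem_Ici.1 hy) (Or.inl hX)
    simp only [Pi.add_apply, Pi.neg_apply]
    linarith

lemma tullock_convexOn_right {X : ℝ} (hX : 0 ≤ X) :
    ConvexOn ℝ (Ici 0) (fun y => tullock γ X y) := by
  rcases hX.eq_or_lt with rfl | hX
  · simpa only [tullock_zero_left hγ0] using convexOn_const (0 : ℝ) (convex_Ici (0 : ℝ))
  · exact (tullock_strictConvexOn_right hγ0 hγ1 hX).convexOn

end Tullock

section EffectiveEffort

variable {m : ℕ} {ρ : Matrix (Fin m) (Fin m) ℝ}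

lemma effY_mono (hρ : ∀ k l, 0 ≤ ρ k l) {e e' : Fin m → ℝ} (h : e ≤ e') (k : Fin m) :
    effY ρ e k ≤ effY ρ e' k :=
  add_le_add (h k) (sum_le_sum fun l _ => mul_le_mul_of_nonneg_left (h l) (hρ l k))

lemma le_effY (hρ : ∀ k l, 0 ≤ ρ k l) {e : Fin m → ℝ} (he : 0 ≤ e) (k : Fin m) :
    e k ≤ effY ρ e k :=
  le_add_of_nonneg_right (sum_nonneg fun l _ => mul_nonneg (hρ l k) (he l))

lemma effY_nonneg (hρ : ∀ k l, 0 ≤ ρ k l) {e : Fin m → ℝ} (he : 0 ≤ e) (k : Fin m) :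
    0 ≤ effY ρ e k :=
  (he k).trans (le_effY hρ he k)

lemma effY_smul_add_smul (s t : ℝ) (e e' : Fin m → ℝ) (k : Fin m) :
    effY ρ (s • e + t • e') k = s * effY ρ e k + t * effY ρ e' k := by
  simp only [effY, Pi.add_apply, Pi.smul_apply, smul_eq_mul, mul_add, sum_add_distrib, mul_sum]
  ring_nf

end EffectiveEffort

noncomputable def prize {m : ℕ} (γ : ℝ) (v : Fin m → ℝ) (A B : Fin m → ℝ) : ℝ :=
  ∑ k, v k * tullock γ (A k) (B k)

lemma prize_add_prize_swap {m : ℕ} {γ : ℝ} (v : Fin m → ℝ) {A B : Fin m → ℝ} (hA : 0 ≤ A)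
    (hB : 0 ≤ B) (h : ∀ k, 0 < A k ∨ 0 < B k) :
    prize γ v A B + prize γ v B A = ∑ k, v k := by
  rw [prize, prize, ← sum_add_distrib]
  exact sum_congr rfl fun k _ => by
    rw [← mul_add, tullock_add_tullock_swap (hA k) (hB k) (h k), mul_one]

section BestResponse

variable {m : ℕ} {γ : ℝ} {v : Fin m → ℝ} {ρ : Matrix (Fin m) (Fin m) ℝ} {c : ℝ}

/-- The midpoint of two maximizers would do strictly better if their effective efforts differed
where the objective is strictly concave. -/
theorem effY_eq_of_isMaxOn (hρ : ∀ k l, 0 ≤ ρ k l) (hv : ∀ k, 0 < v k)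
    {f : Fin m → ℝ → ℝ} (hf : ∀ k, ConcaveOn ℝ (Ici 0) (f k)) {a x : Fin m → ℝ}
    (ha : 0 ≤ a) (hx : 0 ≤ x)
    (hA : IsMaxOn (fun e => ∑ k, v k * f k (effY ρ e k) - c * ∑ k, e k) (Ici 0) a)
    (hX : IsMaxOn (fun e => ∑ k, v k * f k (effY ρ e k) - c * ∑ k, e k) (Ici 0) x)
    {k : Fin m} (hfk : StrictConcaveOn ℝ (Ici 0) (f k)) :
    effY ρ a k = effY ρ x k := by
  by_contra hne
  set z : Fin m → ℝ := (1 / 2 : ℝ) • a + (1 / 2 : ℝ) • x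
  have hz : 0 ≤ z := add_nonneg (smul_nonneg (by norm_num) ha) (smul_nonneg (by norm_num) hx)
  have hya := effY_nonneg hρ ha
  have hyx := effY_nonneg hρ hx
  have hmid : ∀ j, 1 / 2 * (v j * f j (effY ρ a j)) + 1 / 2 * (v j * f j (effY ρ x j))
      ≤ v j * f j (effY ρ z j) := fun j => by
    have := (hf j).2 (hya j) (hyx j) one_half_pos.le one_half_pos.le (add_halves 1)
    rw [effY_smul_add_smul]
    simp only [smul_eq_mul] at this
    nlinarith [hv j]
  have hmid_strict : 1 / 2 * (v k * f k (effY ρ a k)) + 1 / 2 * (v k * f k (effY ρ x k))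
      < v k * f k (effY ρ z k) := by
    have := hfk.2 (hya k) (hyx k) hne one_half_pos one_half_pos (add_halves 1)
    rw [effY_smul_add_smul]
    simp only [smul_eq_mul] at this
    nlinarith [hv k]
  have hsum : 1 / 2 * ∑ j, v j * f j (effY ρ a j) + 1 / 2 * ∑ j, v j * f j (effY ρ x j)
      < ∑ j, v j * f j (effY ρ z j) := by
    rw [mul_sum, mul_sum, ← sum_add_distrib]
    exact sum_lt_sum (fun j _ => hmid j) ⟨k, mem_univ k, hmid_strict⟩
  have hcost : c * ∑ j, z j = 1 / 2 * (c * ∑ j, a j) + 1 / 2 * (c * ∑ j, x j) := by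
    simp only [z, Pi.add_apply, Pi.smul_apply, smul_eq_mul, sum_add_distrib, ← mul_sum]
    ring
  have hza := isMaxOn_iff.1 hA z hz
  have hzx := isMaxOn_iff.1 hX z hz
  linarith

theorem effY_pos_or_pos_of_isMaxOn (hγ : 0 < γ) (hρ : ∀ k l, 0 ≤ ρ k l) (hv : ∀ k, 0 < v k)
    (hc : 0 < c) {Y a : Fin m → ℝ} (hY : 0 ≤ Y) (ha : 0 ≤ a)
    (hmax : IsMaxOn (fun e => prize γ v (effY ρ e) Y - c * ∑ k, e k) (Ici 0) a) (k : Fin m) :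
    0 < effY ρ a k ∨ 0 < Y k := by
  refine (show (0 : ℝ) ≤ Y k from hY k).eq_or_lt.imp_left fun hYk => ?_
  by_contra hak
  replace hak : effY ρ a k = 0 := le_antisymm (not_lt.1 hak) (effY_nonneg hρ ha k)
  -- entering battlefield `k` with effort `v k / (2 c)` wins it outright at half its value
  set ε := v k / (2 * c)
  have hε : 0 < ε := div_pos (hv k) (by linarith)
  set a' := a + Pi.single k ε
  have haa' : a ≤ a' := le_add_of_nonneg_right (Pi.single_nonneg.2 hε.le)
  have ha'k : 0 < effY ρ a' k := by
    have : a' k = a k + ε := by simp [a']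
    linarith [show (0 : ℝ) ≤ a k from ha k, le_effY hρ (ha.trans haa') k]
  have hgain : prize γ v (effY ρ a) Y + v k ≤ prize γ v (effY ρ a') Y := by
    have hterm : ∀ j ∈ Finset.univ, 0 ≤ v j * tullock γ (effY ρ a' j) (Y j)
        - v j * tullock γ (effY ρ a j) (Y j) := fun j _ =>
      sub_nonneg.2 <| mul_le_mul_of_nonneg_left
        (tullock_mono_left hγ.le (effY_nonneg hρ ha j) (hY j) (effY_mono hρ haa' j)) (hv j).le
    have := single_le_sum hterm (mem_univ k)
    rw [sum_sub_distrib, ← hYk, hak, tullock_zero_left hγ, tullock_zero_right hγ ha'k] at this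
    rw [prize, prize]
    linarith
  have hcost : c * ∑ j, a' j = c * ∑ j, a j + c * ε := by simp [a', sum_add_distrib, mul_add]
  have := isMaxOn_iff.1 hmax a' (ha.trans haa')
  have hcε : c * ε = v k / 2 := by
    simp only [ε]
    field_simp
  linarith [hv k]

end BestResponse

lemma IsNashEq.isMaxOn {m : ℕ} {γ : ℝ} {v : Fin m → ℝ} {c : Fin 2 → ℝ}
    {ρ : Fin 2 → Matrix (Fin m) (Fin m) ℝ} {e : Fin 2 → Fin m → ℝ} (h : IsNashEq γ v c ρ e)
    (i : Fin 2) :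
    IsMaxOn (fun x => prize γ v (effY (ρ i) x) (effY (ρ (1 - i)) (e (1 - i))) - c i * ∑ k, x k)
      (Ici 0) (e i) := by
  have hi : 1 - i ≠ i := by fin_cases i <;> decide
  refine isMaxOn_iff.2 fun x hx => ?_
  simpa [payoff, prize, Function.update_of_ne hi] using h.2 i x hx

noncomputable def contestLoss {m : ℕ} (γ : ℝ) (v : Fin m → ℝ) (c₀ c₁ : ℝ)
    (ρ₀ ρ₁ : Matrix (Fin m) (Fin m) ℝ) (a b : Fin m → ℝ) : ℝ :=
  c₀ * ∑ k, a k - c₁ * ∑ k, b k - prize γ v (effY ρ₀ a) (effY ρ₁ b)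

section Equilibrium

variable {m : ℕ} {γ : ℝ} {v : Fin m → ℝ}

theorem IsNashEq.contestLoss_le {c : Fin 2 → ℝ} {ρ : Fin 2 → Matrix (Fin m) (Fin m) ℝ}
    {e : Fin 2 → Fin m → ℝ} (hγ : 0 < γ) (hv : ∀ k, 0 < v k) (hc : ∀ i, 0 < c i)
    (hρ : ∀ i k l, 0 ≤ ρ i k l) (h : IsNashEq γ v c ρ e) {y : Fin m → ℝ} (hy : 0 ≤ y) :
    contestLoss γ v (c 0) (c 1) (ρ 0) (ρ 1) (e 0) y
      ≤ contestLoss γ v (c 0) (c 1) (ρ 0) (ρ 1) (e 0) (e 1) := by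
  set A := effY (ρ 0) (e 0)
  have hA : 0 ≤ A := effY_nonneg (hρ 0) (h.1 0)
  have h₀ := h.isMaxOn 0
  have h₁ := h.isMaxOn 1
  simp only [sub_zero, sub_self] at h₀ h₁
  have hval := prize_add_prize_swap (γ := γ) v hA (effY_nonneg (hρ 1) (h.1 1))
    (effY_pos_or_pos_of_isMaxOn hγ (hρ 0) hv (hc 0) (effY_nonneg (hρ 1) (h.1 1)) (h.1 0) h₀)
  -- `y + ε` contests every battlefield, so there player 1's true and zero-sum payoffs agree
  have hperturbed : ∀ ε > 0, contestLoss γ v (c 0) (c 1) (ρ 0) (ρ 1) (e 0) y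
      ≤ contestLoss γ v (c 0) (c 1) (ρ 0) (ρ 1) (e 0) (e 1) + c 1 * m * ε := by
    intro ε hε
    set y' : Fin m → ℝ := y + fun _ => ε
    have hyy' : y ≤ y' := le_add_of_nonneg_right fun _ => hε.le
    have hy' : 0 ≤ y' := hy.trans hyy'
    have hy'pos : ∀ k, 0 < effY (ρ 1) y' k := fun k => by
      have : y' k = y k + ε := rfl
      linarith [show (0 : ℝ) ≤ y k from hy k, le_effY (hρ 1) hy' k]
    have hval' := prize_add_prize_swap (γ := γ) v hA (effY_nonneg (hρ 1) hy')
      fun k => Or.inr (hy'pos k)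
    have hmono : prize γ v A (effY (ρ 1) y') ≤ prize γ v A (effY (ρ 1) y) :=
      sum_le_sum fun k _ => mul_le_mul_of_nonneg_left (tullock_anti_right hγ.le (hA k)
        (effY_nonneg (hρ 1) hy k) (effY_mono (hρ 1) hyy' k)) (hv k).le
    have hcost : c 1 * ∑ k, y' k = c 1 * ∑ k, y k + c 1 * m * ε := by
      simp [y', sum_add_distrib]
      ring
    have := isMaxOn_iff.1 h₁ y' hy'
    simp only [contestLoss]
    linarith
  refine le_of_forall_pos_le_add fun δ hδ => ?_
  have hcm : 0 ≤ c 1 * m := mul_nonneg (hc 1).le m.cast_nonneg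
  have hsmall : c 1 * m * (δ / (c 1 * m + 1)) ≤ δ := by
    rw [mul_div_assoc', div_le_iff₀ (by positivity)]
    nlinarith
  linarith [hperturbed _ (div_pos hδ (by positivity : 0 < c 1 * m + 1))]

theorem isSaddlePointOn_of_isNashEq {c : Fin 2 → ℝ} {ρ : Fin 2 → Matrix (Fin m) (Fin m) ℝ}
    {e : Fin 2 → Fin m → ℝ} (hγ : 0 < γ) (hv : ∀ k, 0 < v k) (hc : ∀ i, 0 < c i)
    (hρ : ∀ i k l, 0 ≤ ρ i k l) (h : IsNashEq γ v c ρ e) :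
    IsSaddlePointOn (Ici 0) (Ici 0) (contestLoss γ v (c 0) (c 1) (ρ 0) (ρ 1)) (e 0) (e 1) := by
  intro x hx y hy
  have h₀ := isMaxOn_iff.1 (h.isMaxOn 0) x hx
  simp only [sub_zero] at h₀
  refine (h.contestLoss_le hγ hv hc hρ hy).trans ?_
  simp only [contestLoss]
  linarith

variable {c₀ c₁ : ℝ} {ρ₀ ρ₁ : Matrix (Fin m) (Fin m) ℝ} {a b : Fin m → ℝ}

lemma IsSaddlePointOn.isMaxOn_fst
    (h : IsSaddlePointOn (Ici 0) (Ici 0) (contestLoss γ v c₀ c₁ ρ₀ ρ₁) a b) (hb : 0 ≤ b) :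
    IsMaxOn (fun e => prize γ v (effY ρ₀ e) (effY ρ₁ b) - c₀ * ∑ k, e k) (Ici 0) a :=
  isMaxOn_iff.2 fun x hx => by
    have := h x hx b hb
    simp only [contestLoss] at this
    linarith

lemma IsSaddlePointOn.isMaxOn_snd
    (h : IsSaddlePointOn (Ici 0) (Ici 0) (contestLoss γ v c₀ c₁ ρ₀ ρ₁) a b) (ha : 0 ≤ a) :
    IsMaxOn (fun e => ∑ k, v k * -tullock γ (effY ρ₀ a k) (effY ρ₁ e k) - c₁ * ∑ k, e k)
      (Ici 0) b :=
  isMaxOn_iff.2 fun y hy => by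
    have := h a ha y hy
    simp only [contestLoss, prize, mul_neg, sum_neg_distrib] at this ⊢
    linarith

theorem IsSaddlePointOn.pos_effY_iff (hγ0 : 0 < γ) (hγ1 : γ ≤ 1) (hv : ∀ k, 0 < v k)
    (hc₀ : 0 < c₀) (hρ₀ : ∀ k l, 0 ≤ ρ₀ k l) (hρ₁ : ∀ k l, 0 ≤ ρ₁ k l) {x y : Fin m → ℝ}
    (ha : 0 ≤ a) (hb : 0 ≤ b) (hx : 0 ≤ x) (hy : 0 ≤ y)
    (hab : IsSaddlePointOn (Ici 0) (Ici 0) (contestLoss γ v c₀ c₁ ρ₀ ρ₁) a b)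
    (hxy : IsSaddlePointOn (Ici 0) (Ici 0) (contestLoss γ v c₀ c₁ ρ₀ ρ₁) x y) :
    (∀ k, 0 < effY ρ₀ a k ↔ 0 < effY ρ₀ x k) ∧ (∀ k, 0 < effY ρ₁ b k ↔ 0 < effY ρ₁ y k) := by
  have hxb := hab.swap_right ha hy hxy
  have hay := hab.swap_left hx hb hxy
  have hcover : ∀ {a b : Fin m → ℝ}, 0 ≤ a → 0 ≤ b →
      IsSaddlePointOn (Ici 0) (Ici 0) (contestLoss γ v c₀ c₁ ρ₀ ρ₁) a b →
      ∀ k, 0 < effY ρ₀ a k ∨ 0 < effY ρ₁ b k := fun ha hb h =>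
    effY_pos_or_pos_of_isMaxOn hγ0 hρ₀ hv hc₀ (effY_nonneg hρ₁ hb) ha (h.isMaxOn_fst hb)
  have hsupp₀ : ∀ k, 0 < effY ρ₀ a k ↔ 0 < effY ρ₀ x k := fun k => by
    rcases (effY_nonneg hρ₁ hb k).eq_or_lt with hk | hk
    · exact iff_of_true ((hcover ha hb hab k).resolve_right hk.ge.not_gt)
        ((hcover hx hb hxb k).resolve_right hk.ge.not_gt)
    · rw [effY_eq_of_isMaxOn (f := fun k y => tullock γ y (effY ρ₁ b k)) hρ₀ hv
        (fun j => tullock_concaveOn hγ0 hγ1 (effY_nonneg hρ₁ hb j)) ha hx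
        (hab.isMaxOn_fst hb) (hxb.isMaxOn_fst hb) (tullock_strictConcaveOn hγ0 hγ1 hk)]
  refine ⟨hsupp₀, fun k => ?_⟩
  rcases (effY_nonneg hρ₀ ha k).eq_or_lt with hk | hk
  · have hxk : ¬0 < effY ρ₀ x k := (hsupp₀ k).not.1 hk.ge.not_gt
    exact iff_of_true ((hcover ha hb hab k).resolve_left hk.ge.not_gt)
      ((hcover hx hy hxy k).resolve_left hxk)
  · rw [effY_eq_of_isMaxOn (f := fun k y => -tullock γ (effY ρ₀ a k) y) hρ₁ hv
      (fun j => (tullock_convexOn_right hγ0 hγ1 (effY_nonneg hρ₀ ha j)).neg) hb hy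
      (hab.isMaxOn_snd ha) (hay.isMaxOn_snd ha) (tullock_strictConvexOn_right hγ0 hγ1 hk).neg]

end Equilibrium

theorem equilibrium_battlefield_partition_unique_general (m : ℕ) (γ : ℝ) (hγ0 : 0 < γ) (hγ1 : γ ≤ 1)
    (v : Fin m → ℝ) (hv : ∀ k, 0 < v k)
    (c : Fin 2 → ℝ) (hc : ∀ i, 0 < c i)
    (ρ : Fin 2 → Matrix (Fin m) (Fin m) ℝ)
    (hρ : ∀ i k l, 0 ≤ ρ i k l)
    (eA eB eC eD : Fin 2 → Fin m → ℝ)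
    (hA : IsNashEq γ v c ρ eA) (hB : IsNashEq γ v c ρ eB)
    (hC : IsNashEq γ v c ρ eC) (hD : IsNashEq γ v c ρ eD) :
    (∀ k, (0 < effY (ρ 0) (eA 0) k ∧ 0 < effY (ρ 1) (eB 1) k) ↔
          (0 < effY (ρ 0) (eC 0) k ∧ 0 < effY (ρ 1) (eD 1) k)) ∧
    (∀ (i : Fin 2) (k : Fin m),
      (0 < effY (ρ i) (![eA 0, eB 1] i) k ∧
        effY (ρ (1 - i)) (![eA 0, eB 1] (1 - i)) k = 0) ↔
      (0 < effY (ρ i) (![eC 0, eD 1] i) k ∧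
        effY (ρ (1 - i)) (![eC 0, eD 1] (1 - i)) k = 0)) := by
  have hsupp : ∀ {e e'}, IsNashEq γ v c ρ e → IsNashEq γ v c ρ e' →
      (∀ k, 0 < effY (ρ 0) (e 0) k ↔ 0 < effY (ρ 0) (e' 0) k) ∧
      (∀ k, 0 < effY (ρ 1) (e 1) k ↔ 0 < effY (ρ 1) (e' 1) k) := fun he he' =>
    IsSaddlePointOn.pos_effY_iff hγ0 hγ1 hv (hc 0) (hρ 0) (hρ 1) (he.1 0) (he.1 1) (he'.1 0)
      (he'.1 1) (isSaddlePointOn_of_isNashEq hγ0 hv hc hρ he)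
      (isSaddlePointOn_of_isNashEq hγ0 hv hc hρ he')
  have hzero : ∀ {s t : ℝ}, 0 ≤ s → 0 ≤ t → (0 < s ↔ 0 < t) → (s = 0 ↔ t = 0) :=
    fun hs ht h => by rw [← hs.ge_iff_eq', ← ht.ge_iff_eq', ← not_lt, ← not_lt, h]
  obtain ⟨hS₀, -⟩ := hsupp hA hC
  obtain ⟨-, hS₁⟩ := hsupp hB hD
  refine ⟨fun k => and_congr (hS₀ k) (hS₁ k), fun i k => ?_⟩
  fin_cases i
  · simpa using and_congr (hS₀ k)
      (hzero (effY_nonneg (hρ 1) (hB.1 1) k) (effY_nonneg (hρ 1) (hD.1 1) k) (hS₁ k))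
  · simpa using and_congr (hS₁ k)
      (hzero (effY_nonneg (hρ 0) (hA.1 0) k) (effY_nonneg (hρ 0) (hC.1 0) k) (hS₀ k))

/-- the partition of battlefields into `B⁺`, `A₁`, `A₂` is the
same across all pairs of equilibrium effective-effort vectors (each pair
possibly assembled from two different equilibria). -/
theorem equilibrium_battlefield_partition_unique (m : ℕ) (γ : ℝ) (hγ0 : 0 < γ) (hγ1 : γ ≤ 1)
    (v : Fin m → ℝ) (hv : ∀ k, 0 < v k)
    (c : Fin 2 → ℝ) (hc : ∀ i, 0 < c i)
    (ρ : Fin 2 → Matrix (Fin m) (Fin m) ℝ)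
    (hρ : ∀ i k l, 0 ≤ ρ i k l) (hρd : ∀ i k, ρ i k k = 0)
    (eA eB eC eD : Fin 2 → Fin m → ℝ)
    (hA : IsNashEq γ v c ρ eA) (hB : IsNashEq γ v c ρ eB)
    (hC : IsNashEq γ v c ρ eC) (hD : IsNashEq γ v c ρ eD) :
    (∀ k, (0 < effY (ρ 0) (eA 0) k ∧ 0 < effY (ρ 1) (eB 1) k) ↔
          (0 < effY (ρ 0) (eC 0) k ∧ 0 < effY (ρ 1) (eD 1) k)) ∧
    (∀ (i : Fin 2) (k : Fin m),
      (0 < effY (ρ i) (![eA 0, eB 1] i) k ∧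
        effY (ρ (1 - i)) (![eA 0, eB 1] (1 - i)) k = 0) ↔
      (0 < effY (ρ i) (![eC 0, eD 1] i) k ∧
        effY (ρ (1 - i)) (![eC 0, eD 1] (1 - i)) k = 0)) :=
  equilibrium_battlefield_partition_unique_general m γ hγ0 hγ1 v hv c hc ρ hρ eA eB eC eD hA hB hC
    hD
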